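/- arXiv:2505.17129 — 6 statements merged into one kernel-verified Lean document; each statement's English description precedes it below -/
import Mathlib

section
/- Let x_1,...,x_n be distinct real numbers and ξ_1,...,ξ_m distinct complex numbers (distinct from the x_j). If the stationary relations hold, i.e. for each k, -∑_{j=1}^n 1/(ξ_k - x_j) + ∑_{l≠k} 2/(ξ_k - ξ_l) = 0, then the quantities u_j := -∑_{l=1}^m 4/(x_j - ξ_l) satisfy the algebraic equations (1/2)u_j² + 2∑_{k≠j} (u_j - u_k)/(x_j - x_k) = 0 for each j = 1,...,n. -/
open Finset

/-- Swapping the two indices in a sum over off-diagonal pairs. -/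
lemma offdiag_swap {m : ℕ} (f : Fin m → Fin m → ℂ) :
    ∑ l : Fin m, ∑ l' ∈ Finset.univ.filter (· ≠ l), f l l'
      = ∑ l : Fin m, ∑ l' ∈ Finset.univ.filter (· ≠ l), f l' l := by
  rw [Finset.sum_comm' (t' := Finset.univ) (s' := fun l' => Finset.univ.filter (· ≠ l'))]
  intro a b
  simp [ne_comm]

/-- stationary relations imply the algebraic equations for
`u_j = -∑_l 4/(x_j - ξ_l)`. -/
theorem stmt_0 (n m : ℕ) (x : Fin n → ℝ) (ξ : Fin m → ℂ)
    (hx : Function.Injective x) (hξ : Function.Injective ξ)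
    (hxξ : ∀ j k, (x j : ℂ) ≠ ξ k)
    (hstat : ∀ k : Fin m,
      -∑ j : Fin n, 1 / (ξ k - (x j : ℂ))
        + ∑ l ∈ Finset.univ.filter (· ≠ k), 2 / (ξ k - ξ l) = 0) :
    ∀ j : Fin n,
      (1 / 2) * (-∑ l : Fin m, 4 / ((x j : ℂ) - ξ l)) ^ 2
        + 2 * ∑ k ∈ Finset.univ.filter (· ≠ j),
            ((-∑ l : Fin m, 4 / ((x j : ℂ) - ξ l))
              - (-∑ l : Fin m, 4 / ((x k : ℂ) - ξ l))) / ((x j : ℂ) - (x k : ℂ)) = 0 := by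
  have hxx : ∀ a b : Fin n, a ≠ b → (x a : ℂ) - x b ≠ 0 := by
    intro a b hab h
    exact hab (hx (by exact_mod_cast sub_eq_zero.mp h))
  have hxz : ∀ (a : Fin n) (l : Fin m), (x a : ℂ) - ξ l ≠ 0 :=
    fun a l h => hxξ a l (sub_eq_zero.mp h)
  have hzz : ∀ k l : Fin m, k ≠ l → ξ k - ξ l ≠ 0 :=
    fun k l h hk => h (hξ (sub_eq_zero.mp hk))
  have hflip : ∀ a b : ℂ, 1 / (a - b) = -(1 / (b - a)) := by
    intro a b; rw [← neg_sub b a, div_neg]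
  intro j
  -- Step A: rewrite the difference quotients
  have hA : ∑ k ∈ Finset.univ.filter (· ≠ j),
      ((-∑ l : Fin m, 4 / ((x j : ℂ) - ξ l)) - (-∑ l : Fin m, 4 / ((x k : ℂ) - ξ l)))
        / ((x j : ℂ) - (x k : ℂ))
      = ∑ k ∈ Finset.univ.filter (· ≠ j), ∑ l : Fin m,
          4 / (((x j : ℂ) - ξ l) * ((x k : ℂ) - ξ l)) := by
    refine Finset.sum_congr rfl ?_
    intro k hk
    have hkj : k ≠ j := by simpa using (Finset.mem_filter.mp hk).2
    have hjk : (x j : ℂ) - x k ≠ 0 := hxx j k (Ne.symm hkj)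
    rw [neg_sub_neg, ← Finset.sum_sub_distrib, Finset.sum_div]
    refine Finset.sum_congr rfl fun l _ => ?_
    have h1 := hxz j l
    have h2 := hxz k l
    field_simp
    ring
  -- Step B: expand the square
  have hB : (-∑ l : Fin m, 4 / ((x j : ℂ) - ξ l)) ^ 2
      = ∑ l : Fin m, ∑ l' : Fin m,
          16 / (((x j : ℂ) - ξ l) * ((x j : ℂ) - ξ l')) := by
    rw [neg_sq, sq, Finset.sum_mul_sum]
    refine Finset.sum_congr rfl fun l _ => Finset.sum_congr rfl fun l' _ => ?_
    rw [div_mul_div_comm]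
    norm_num
  -- Stationary relations rewritten
  have h3 : ∀ l : Fin m,
      (2 : ℂ) * ∑ l' ∈ Finset.univ.filter (· ≠ l), 1 / (ξ l - ξ l')
        = -∑ j' : Fin n, 1 / ((x j' : ℂ) - ξ l) := by
    intro l
    have h := hstat l
    have e1 : ∑ l' ∈ Finset.univ.filter (· ≠ l), (2 : ℂ) / (ξ l - ξ l')
        = 2 * ∑ l' ∈ Finset.univ.filter (· ≠ l), 1 / (ξ l - ξ l') := by
      rw [Finset.mul_sum]
      exact Finset.sum_congr rfl fun l' _ => by rw [mul_one_div]
    have e2 : ∑ j' : Fin n, 1 / (ξ l - (x j' : ℂ))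
        = -∑ j' : Fin n, 1 / ((x j' : ℂ) - ξ l) := by
      rw [← Finset.sum_neg_distrib]
      exact Finset.sum_congr rfl fun j' _ => hflip _ _
    rw [e1, e2] at h
    linear_combination h
  -- Key identity
  have key : ∑ l : Fin m, ∑ l' : Fin m,
        (1 : ℂ) / (((x j : ℂ) - ξ l) * ((x j : ℂ) - ξ l'))
      = -∑ k ∈ Finset.univ.filter (· ≠ j), ∑ l : Fin m,
          1 / (((x j : ℂ) - ξ l) * ((x k : ℂ) - ξ l)) := by
    -- split diagonal from off-diagonal
    have splitinner : ∀ l : Fin m, ∑ l' : Fin m,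
        (1 : ℂ) / (((x j : ℂ) - ξ l) * ((x j : ℂ) - ξ l'))
        = 1 / (((x j : ℂ) - ξ l) * ((x j : ℂ) - ξ l))
          + ∑ l' ∈ Finset.univ.filter (· ≠ l),
              1 / (((x j : ℂ) - ξ l) * ((x j : ℂ) - ξ l')) := by
      intro l
      rw [Finset.filter_ne' Finset.univ l]
      exact (Finset.add_sum_erase Finset.univ _ (Finset.mem_univ l)).symm
    -- the off-diagonal double sum
    have hoff : ∑ l : Fin m, ∑ l' ∈ Finset.univ.filter (· ≠ l),
          (1 : ℂ) / (((x j : ℂ) - ξ l) * ((x j : ℂ) - ξ l'))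
        = ∑ l : Fin m, (1 / ((x j : ℂ) - ξ l))
            * (2 * ∑ l' ∈ Finset.univ.filter (· ≠ l), 1 / (ξ l - ξ l')) := by
      have step1 : ∑ l : Fin m, ∑ l' ∈ Finset.univ.filter (· ≠ l),
            (1 : ℂ) / (((x j : ℂ) - ξ l) * ((x j : ℂ) - ξ l'))
          = ∑ l : Fin m, ∑ l' ∈ Finset.univ.filter (· ≠ l),
              ((1 / (ξ l - ξ l')) * (1 / ((x j : ℂ) - ξ l))
                + (1 / (ξ l' - ξ l)) * (1 / ((x j : ℂ) - ξ l'))) := by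
        refine Finset.sum_congr rfl fun l _ => Finset.sum_congr rfl fun l' hl' => ?_
        have hll' : l' ≠ l := by simpa using (Finset.mem_filter.mp hl').2
        have hz1 := hzz l l' (Ne.symm hll')
        have hz2 := hzz l' l hll'
        have h1 := hxz j l
        have h2 := hxz j l'
        field_simp
        ring
      rw [step1]
      simp only [Finset.sum_add_distrib]
      rw [offdiag_swap (fun l l' => (1 / (ξ l' - ξ l)) * (1 / ((x j : ℂ) - ξ l')))]
      rw [← two_mul, Finset.mul_sum]
      refine Finset.sum_congr rfl fun l _ => ?_
      rw [Finset.mul_sum, Finset.mul_sum, Finset.mul_sum]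
      exact Finset.sum_congr rfl fun l' _ => by ring
    -- use the stationary relations
    have hoff2 : ∑ l : Fin m, ∑ l' ∈ Finset.univ.filter (· ≠ l),
          (1 : ℂ) / (((x j : ℂ) - ξ l) * ((x j : ℂ) - ξ l'))
        = -∑ l : Fin m, ∑ j' : Fin n,
            (1 / ((x j : ℂ) - ξ l)) * (1 / ((x j' : ℂ) - ξ l)) := by
      rw [hoff, ← Finset.sum_neg_distrib]
      refine Finset.sum_congr rfl fun l _ => ?_
      rw [h3 l, ← Finset.sum_neg_distrib, Finset.mul_sum, ← Finset.sum_neg_distrib]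
      exact Finset.sum_congr rfl fun j' _ => by ring
    -- split off j' = j and cancel the diagonal
    have splitj : ∀ l : Fin m, ∑ j' : Fin n,
        (1 / ((x j : ℂ) - ξ l)) * (1 / ((x j' : ℂ) - ξ l))
        = (1 / ((x j : ℂ) - ξ l)) * (1 / ((x j : ℂ) - ξ l))
          + ∑ j' ∈ Finset.univ.filter (· ≠ j),
              (1 / ((x j : ℂ) - ξ l)) * (1 / ((x j' : ℂ) - ξ l)) := by
      intro l
      rw [Finset.filter_ne' Finset.univ j]
      exact (Finset.add_sum_erase Finset.univ _ (Finset.mem_univ j)).symm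
    calc ∑ l : Fin m, ∑ l' : Fin m,
          (1 : ℂ) / (((x j : ℂ) - ξ l) * ((x j : ℂ) - ξ l'))
        = ∑ l : Fin m, (1 / (((x j : ℂ) - ξ l) * ((x j : ℂ) - ξ l))
            + ∑ l' ∈ Finset.univ.filter (· ≠ l),
                1 / (((x j : ℂ) - ξ l) * ((x j : ℂ) - ξ l'))) :=
          Finset.sum_congr rfl fun l _ => splitinner l
      _ = ∑ l : Fin m, 1 / (((x j : ℂ) - ξ l) * ((x j : ℂ) - ξ l))
            + ∑ l : Fin m, ∑ l' ∈ Finset.univ.filter (· ≠ l),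
                (1 : ℂ) / (((x j : ℂ) - ξ l) * ((x j : ℂ) - ξ l')) := by
          rw [Finset.sum_add_distrib]
      _ = ∑ l : Fin m, 1 / (((x j : ℂ) - ξ l) * ((x j : ℂ) - ξ l))
            - ∑ l : Fin m, ∑ j' : Fin n,
                (1 / ((x j : ℂ) - ξ l)) * (1 / ((x j' : ℂ) - ξ l)) := by
          rw [hoff2]; ring
      _ = -∑ l : Fin m, ∑ j' ∈ Finset.univ.filter (· ≠ j),
              (1 / ((x j : ℂ) - ξ l)) * (1 / ((x j' : ℂ) - ξ l)) := by
          rw [Finset.sum_congr rfl fun l (_ : l ∈ Finset.univ) => splitj l,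
            Finset.sum_add_distrib]
          have : ∀ l : Fin m, (1 : ℂ) / (((x j : ℂ) - ξ l) * ((x j : ℂ) - ξ l))
              = (1 / ((x j : ℂ) - ξ l)) * (1 / ((x j : ℂ) - ξ l)) := by
            intro l; rw [div_mul_div_comm, one_mul]
          rw [Finset.sum_congr rfl fun l _ => this l]
          ring
      _ = -∑ k ∈ Finset.univ.filter (· ≠ j), ∑ l : Fin m,
              1 / (((x j : ℂ) - ξ l) * ((x k : ℂ) - ξ l)) := by
          rw [Finset.sum_comm]
          congr 1
          refine Finset.sum_congr rfl fun k _ => Finset.sum_congr rfl fun l _ => ?_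
          rw [div_mul_div_comm, one_mul]
  -- assemble
  rw [hB, hA]
  have c1 : ∑ l : Fin m, ∑ l' : Fin m,
        (16 : ℂ) / (((x j : ℂ) - ξ l) * ((x j : ℂ) - ξ l'))
      = 16 * ∑ l : Fin m, ∑ l' : Fin m,
          (1 : ℂ) / (((x j : ℂ) - ξ l) * ((x j : ℂ) - ξ l')) := by
    rw [Finset.mul_sum]
    refine Finset.sum_congr rfl fun l _ => ?_
    rw [Finset.mul_sum]
    exact Finset.sum_congr rfl fun l' _ => by rw [mul_one_div]
  have c2 : ∑ k ∈ Finset.univ.filter (· ≠ j), ∑ l : Fin m,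
        (4 : ℂ) / (((x j : ℂ) - ξ l) * ((x k : ℂ) - ξ l))
      = 4 * ∑ k ∈ Finset.univ.filter (· ≠ j), ∑ l : Fin m,
          (1 : ℂ) / (((x j : ℂ) - ξ l) * ((x k : ℂ) - ξ l)) := by
    rw [Finset.mul_sum]
    refine Finset.sum_congr rfl fun k _ => ?_
    rw [Finset.mul_sum]
    exact Finset.sum_congr rfl fun l _ => by rw [mul_one_div]
  rw [c1, c2, key]
  ring
end

section
/- Let x_1,...,x_n be distinct real numbers and ξ_1,...,ξ_m distinct complex numbers closed under conjugation, satisfying the stationary relations -∑_{j=1}^n 1/(ξ_k - x_j) + ∑_{l≠k} 2/(ξ_k - ξ_l) = 0 for each k. Define U_j = ∑_{k≠j} 2/(x_j - x_k) - ∑_{l=1}^m 4/(x_j - ξ_l). Then U_j satisfies the null vector equations (1/2)U_j² + ∑_{k≠j} 2/(x_k - x_j) · U_k - ∑_{k≠j} 6/(x_k - x_j)² = 0 for each j. -/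
open Finset

/-- Pairing identity: `1/(u(v-u)) + 1/(v(u-v)) = 1/(uv)`. -/
lemma pair_inv {u v : ℂ} (hu : u ≠ 0) (hv : v ≠ 0) (huv : u ≠ v) :
    1 / (u * (v - u)) + 1 / (v * (u - v)) = 1 / (u * v) := by
  have h1 : v - u ≠ 0 := sub_ne_zero.mpr (Ne.symm huv)
  have h2 : u - v ≠ 0 := sub_ne_zero.mpr huv
  field_simp
  ring

/-- Symmetrization lemma for sums of `1/(w i (w k - w i))` over off-diagonal pairs. -/
lemma sym_sum {ι : Type*} [DecidableEq ι] (s : Finset ι) (w : ι → ℂ)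
    (h0 : ∀ i ∈ s, w i ≠ 0)
    (hinj : ∀ i ∈ s, ∀ k ∈ s, i ≠ k → w i ≠ w k) :
    2 * ∑ i ∈ s, ∑ k ∈ s.erase i, 1 / (w i * (w k - w i))
      = (∑ i ∈ s, 1 / w i) ^ 2 - ∑ i ∈ s, 1 / (w i) ^ 2 := by
  have hswap : ∑ i ∈ s, ∑ k ∈ s.erase i, 1 / (w i * (w k - w i))
      = ∑ i ∈ s, ∑ k ∈ s.erase i, 1 / (w k * (w i - w k)) := by
    rw [Finset.sum_comm' (s' := fun k => s.erase k) (t' := s)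
      (fun i k => by
        simp only [Finset.mem_erase]
        constructor
        · rintro ⟨hi, hk, hks⟩; exact ⟨⟨Ne.symm hk, hi⟩, hks⟩
        · rintro ⟨⟨hik, hi⟩, hks⟩; exact ⟨hi, Ne.symm hik, hks⟩)]
  have key : 2 * ∑ i ∈ s, ∑ k ∈ s.erase i, 1 / (w i * (w k - w i))
      = ∑ i ∈ s, ∑ k ∈ s.erase i, 1 / (w i * w k) := by
    calc 2 * ∑ i ∈ s, ∑ k ∈ s.erase i, 1 / (w i * (w k - w i))
        = ∑ i ∈ s, ∑ k ∈ s.erase i, 1 / (w i * (w k - w i))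
          + ∑ i ∈ s, ∑ k ∈ s.erase i, 1 / (w k * (w i - w k)) := by
          rw [← hswap]; ring
      _ = ∑ i ∈ s, ∑ k ∈ s.erase i, (1 / (w i * (w k - w i)) + 1 / (w k * (w i - w k))) := by
          rw [← Finset.sum_add_distrib]
          exact Finset.sum_congr rfl fun i _ => (Finset.sum_add_distrib).symm
      _ = ∑ i ∈ s, ∑ k ∈ s.erase i, 1 / (w i * w k) := by
          refine Finset.sum_congr rfl fun i hi => Finset.sum_congr rfl fun k hk => ?_
          have hks := Finset.mem_of_mem_erase hk
          have hne : k ≠ i := Finset.ne_of_mem_erase hk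
          exact pair_inv (h0 i hi) (h0 k hks) (hinj i hi k hks (Ne.symm hne))
  rw [key]
  have hsq : (∑ i ∈ s, 1 / w i) ^ 2
      = ∑ i ∈ s, (1 / (w i) ^ 2 + ∑ k ∈ s.erase i, 1 / (w i * w k)) := by
    rw [sq, Finset.sum_mul_sum]
    refine Finset.sum_congr rfl fun i hi => ?_
    rw [← Finset.add_sum_erase s (fun k => 1 / w i * (1 / w k)) hi]
    congr 1
    · rw [sq, one_div_mul_one_div]
    · exact Finset.sum_congr rfl fun k _ => one_div_mul_one_div _ _
  rw [hsq, Finset.sum_add_distrib]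
  ring

/-- stationary relations imply the null vector equations for
`U_j = ∑_{k≠j} 2/(x_j-x_k) - ∑_l 4/(x_j-ξ_l)`. -/
theorem stmt_1 (n m : ℕ) (x : Fin n → ℝ) (ξ : Fin m → ℂ)
    (hx : Function.Injective x) (hξ : Function.Injective ξ)
    (hxξ : ∀ j k, (x j : ℂ) ≠ ξ k)
    (hconj : ∀ k : Fin m, ∃ l : Fin m, ξ l = starRingEnd ℂ (ξ k))
    (hstat : ∀ k : Fin m,
      -∑ j : Fin n, 1 / (ξ k - (x j : ℂ))
        + ∑ l ∈ Finset.univ.filter (· ≠ k), 2 / (ξ k - ξ l) = 0)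
    (U : Fin n → ℂ)
    (hU : ∀ j, U j = ∑ k ∈ Finset.univ.filter (· ≠ j), 2 / ((x j : ℂ) - (x k : ℂ))
        - ∑ l : Fin m, 4 / ((x j : ℂ) - ξ l)) :
    ∀ j : Fin n,
      (1 / 2) * (U j) ^ 2
        + ∑ k ∈ Finset.univ.filter (· ≠ j), 2 / ((x k : ℂ) - (x j : ℂ)) * U k
        - ∑ k ∈ Finset.univ.filter (· ≠ j), 6 / ((x k : ℂ) - (x j : ℂ)) ^ 2 = 0 := by
  intro j
  -- basic distinctness facts in ℂ
  have hxC : ∀ k i : Fin n, k ≠ i → ((x k : ℂ)) ≠ ((x i : ℂ)) := by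
    intro k i hki h
    exact hki (hx (by exact_mod_cast h))
  -- abbreviations
  set w : Fin n → ℂ := fun k => (x j : ℂ) - (x k : ℂ) with hw
  set v : Fin m → ℂ := fun l => (x j : ℂ) - ξ l with hv
  have hw0 : ∀ k ∈ (univ : Finset (Fin n)).erase j, w k ≠ 0 := by
    intro k hk
    exact sub_ne_zero.mpr (hxC j k (Ne.symm (Finset.ne_of_mem_erase hk)))
  have hwinj : ∀ i ∈ (univ : Finset (Fin n)).erase j, ∀ k ∈ (univ : Finset (Fin n)).erase j,
      i ≠ k → w i ≠ w k := by
    intro i _ k _ hik h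
    apply hxC i k hik
    have h' : (x j : ℂ) - (x i : ℂ) = (x j : ℂ) - (x k : ℂ) := h
    linear_combination -h'
  have hv0 : ∀ l, v l ≠ 0 := fun l => sub_ne_zero.mpr (hxξ j l)
  have hvinj : ∀ l ∈ (univ : Finset (Fin m)), ∀ l' ∈ (univ : Finset (Fin m)),
      l ≠ l' → v l ≠ v l' := by
    intro l _ l' _ hll h
    have h' : (x j : ℂ) - ξ l = (x j : ℂ) - ξ l' := h
    exact hll (hξ (by linear_combination -h'))
  set A := ∑ k ∈ (univ : Finset (Fin n)).erase j, 1 / w k with hA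
  set B := ∑ l : Fin m, 1 / v l with hB
  set P := ∑ k ∈ (univ : Finset (Fin n)).erase j, 1 / (w k) ^ 2 with hP
  set Q := ∑ l : Fin m, 1 / (v l) ^ 2 with hQ
  -- rewrite U j
  have hUj : U j = 2 * A - 4 * B := by
    rw [hU j, Finset.filter_ne', hA, hB, Finset.mul_sum, Finset.mul_sum]
    congr 1
    · exact Finset.sum_congr rfl fun k _ => by rw [hw]; ring
    · exact Finset.sum_congr rfl fun l _ => by rw [hv]; ring
  -- the stationary relation rephrased
  have hstat' : ∀ l : Fin m, ∑ k : Fin n, 1 / ((x k : ℂ) - ξ l)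
      = -∑ l' ∈ (univ : Finset (Fin m)).erase l, 2 / (ξ l - ξ l') := by
    intro l
    have h := hstat l
    rw [Finset.filter_ne'] at h
    have : ∑ k : Fin n, 1 / ((x k : ℂ) - ξ l) = -∑ k : Fin n, 1 / (ξ l - (x k : ℂ)) := by
      rw [← Finset.sum_neg_distrib]
      exact Finset.sum_congr rfl fun k _ => by rw [one_div, one_div, ← inv_neg, neg_sub]
    rw [this]
    linear_combination h
  -- I3 : double sum over ξ's
  have hI3 : 2 * ∑ l : Fin m, ∑ l' ∈ (univ : Finset (Fin m)).erase l,
      1 / v l * (1 / (ξ l - ξ l')) = B ^ 2 - Q := by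
    have := sym_sum (univ : Finset (Fin m)) v (fun l _ => hv0 l) hvinj
    rw [hB, hQ, ← this]
    congr 1
    refine Finset.sum_congr rfl fun l _ => Finset.sum_congr rfl fun l' _ => ?_
    rw [one_div_mul_one_div]
    congr 2
    rw [hv]; ring
  -- I1 : ∑_{k≠j} (1/w k) * A_k
  have hI1 : ∑ k ∈ (univ : Finset (Fin n)).erase j,
      1 / w k * (∑ i ∈ (univ : Finset (Fin n)).erase k, 1 / ((x k : ℂ) - (x i : ℂ)))
      = A ^ 2 / 2 - 3 / 2 * P := by
    have hsplit : ∀ k ∈ (univ : Finset (Fin n)).erase j,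
        1 / w k * (∑ i ∈ (univ : Finset (Fin n)).erase k, 1 / ((x k : ℂ) - (x i : ℂ)))
        = -(1 / (w k) ^ 2) + ∑ i ∈ ((univ : Finset (Fin n)).erase j).erase k,
            1 / (w k * (w i - w k)) := by
      intro k hk
      have hkj : k ≠ j := Finset.ne_of_mem_erase hk
      have hj : j ∈ (univ : Finset (Fin n)).erase k := by
        simp [Finset.mem_erase, Ne.symm hkj]
      rw [← Finset.add_sum_erase _ _ hj, Finset.erase_right_comm, mul_add]
      congr 1
      · have h1 : (x k : ℂ) - (x j : ℂ) = -(w k) := by rw [hw]; ring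
        rw [h1]
        have := hw0 k hk
        field_simp
      · rw [Finset.mul_sum]
        refine Finset.sum_congr rfl fun i hi => ?_
        have h2 : (x k : ℂ) - (x i : ℂ) = w i - w k := by rw [hw]; ring
        rw [h2, one_div_mul_one_div]
    rw [Finset.sum_congr rfl hsplit, Finset.sum_add_distrib]
    have hsym := sym_sum ((univ : Finset (Fin n)).erase j) w hw0
      (fun i hi k hk hik => hwinj i hi k hk hik)
    have hD : ∑ k ∈ (univ : Finset (Fin n)).erase j,
        ∑ i ∈ ((univ : Finset (Fin n)).erase j).erase k, 1 / (w k * (w i - w k))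
        = (A ^ 2 - P) / 2 := by
      rw [hA, hP]
      linear_combination hsym / 2
    rw [hD]
    have hneg : ∑ k ∈ (univ : Finset (Fin n)).erase j, -(1 / (w k) ^ 2) = -P := by
      rw [hP]
      exact Finset.sum_neg_distrib _
    rw [hneg]
    ring
  -- I2 : ∑_{k≠j} (1/w k) * B_k
  have hI2 : ∑ k ∈ (univ : Finset (Fin n)).erase j,
      1 / w k * (∑ l : Fin m, 1 / ((x k : ℂ) - ξ l)) = A * B - B ^ 2 := by
    have hpf : ∀ k ∈ (univ : Finset (Fin n)).erase j, ∀ l : Fin m,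
        1 / w k * (1 / ((x k : ℂ) - ξ l))
        = 1 / v l * (1 / w k) + 1 / v l * (1 / ((x k : ℂ) - ξ l)) := by
      intro k hk l
      have h1 : w k ≠ 0 := hw0 k hk
      have h2 : (x k : ℂ) - ξ l ≠ 0 := sub_ne_zero.mpr (hxξ k l)
      have h3 : v l ≠ 0 := hv0 l
      have h4 : v l = w k + ((x k : ℂ) - ξ l) := by rw [hv, hw]; ring
      field_simp
      linear_combination ((x k : ℂ) - ξ l) * w k * h4
    calc ∑ k ∈ (univ : Finset (Fin n)).erase j,
          1 / w k * (∑ l : Fin m, 1 / ((x k : ℂ) - ξ l))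
        = ∑ k ∈ (univ : Finset (Fin n)).erase j, ∑ l : Fin m,
            (1 / v l * (1 / w k) + 1 / v l * (1 / ((x k : ℂ) - ξ l))) := by
          refine Finset.sum_congr rfl fun k hk => ?_
          rw [Finset.mul_sum]
          exact Finset.sum_congr rfl fun l _ => hpf k hk l
      _ = ∑ l : Fin m, ∑ k ∈ (univ : Finset (Fin n)).erase j,
            (1 / v l * (1 / w k) + 1 / v l * (1 / ((x k : ℂ) - ξ l))) := Finset.sum_comm
      _ = ∑ l : Fin m, (1 / v l * A
            + 1 / v l * (∑ k ∈ (univ : Finset (Fin n)).erase j, 1 / ((x k : ℂ) - ξ l))) := by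
          refine Finset.sum_congr rfl fun l _ => ?_
          rw [Finset.sum_add_distrib, ← Finset.mul_sum, ← Finset.mul_sum, hA]
      _ = A * B - B ^ 2 := by
          have hinner : ∀ l : Fin m,
              ∑ k ∈ (univ : Finset (Fin n)).erase j, 1 / ((x k : ℂ) - ξ l)
              = -∑ l' ∈ (univ : Finset (Fin m)).erase l, 2 / (ξ l - ξ l') - 1 / v l := by
            intro l
            have hj : j ∈ (univ : Finset (Fin n)) := Finset.mem_univ j
            have := Finset.add_sum_erase (univ : Finset (Fin n))
              (fun k => 1 / ((x k : ℂ) - ξ l)) hj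
            rw [hstat' l] at this
            rw [hv]
            linear_combination this
          rw [Finset.sum_add_distrib, ← Finset.sum_mul]
          have h2 : ∑ l : Fin m, 1 / v l *
              (∑ k ∈ (univ : Finset (Fin n)).erase j, 1 / ((x k : ℂ) - ξ l))
              = -2 * ∑ l : Fin m, ∑ l' ∈ (univ : Finset (Fin m)).erase l,
                  1 / v l * (1 / (ξ l - ξ l')) - Q := by
            rw [Finset.sum_congr rfl (fun l _ => by rw [hinner l])]
            have : ∀ l : Fin m, 1 / v l *
                (-∑ l' ∈ (univ : Finset (Fin m)).erase l, 2 / (ξ l - ξ l') - 1 / v l)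
                = -2 * ∑ l' ∈ (univ : Finset (Fin m)).erase l, 1 / v l * (1 / (ξ l - ξ l'))
                  - 1 / (v l) ^ 2 := by
              intro l
              have e1 : 1 / v l * (∑ l' ∈ (univ : Finset (Fin m)).erase l, 2 / (ξ l - ξ l'))
                  = 2 * ∑ l' ∈ (univ : Finset (Fin m)).erase l, 1 / v l * (1 / (ξ l - ξ l')) := by
                rw [Finset.mul_sum, Finset.mul_sum]
                exact Finset.sum_congr rfl fun l' _ => by ring
              have e2 : 1 / v l * (1 / v l) = 1 / (v l) ^ 2 := by
                rw [one_div_mul_one_div, ← sq]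
              linear_combination -e1 - e2
            rw [Finset.sum_congr rfl (fun l _ => this l), Finset.sum_sub_distrib,
              ← Finset.mul_sum, hQ]
          rw [h2]
          have h3 : ∑ l : Fin m, ∑ l' ∈ (univ : Finset (Fin m)).erase l,
              1 / v l * (1 / (ξ l - ξ l')) = (B ^ 2 - Q) / 2 := by
            linear_combination hI3 / 2
          rw [h3, hB]
          ring
  -- now assemble
  have hmiddle : ∑ k ∈ Finset.univ.filter (· ≠ j), 2 / ((x k : ℂ) - (x j : ℂ)) * U k
      = -4 * (A ^ 2 / 2 - 3 / 2 * P) + 8 * (A * B - B ^ 2) := by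
    rw [Finset.filter_ne']
    have hterm : ∀ k ∈ (univ : Finset (Fin n)).erase j,
        2 / ((x k : ℂ) - (x j : ℂ)) * U k
        = -4 * (1 / w k * (∑ i ∈ (univ : Finset (Fin n)).erase k, 1 / ((x k : ℂ) - (x i : ℂ))))
          + 8 * (1 / w k * (∑ l : Fin m, 1 / ((x k : ℂ) - ξ l))) := by
      intro k hk
      have h1 : (x k : ℂ) - (x j : ℂ) = -(w k) := by rw [hw]; ring
      have h2 : w k ≠ 0 := hw0 k hk
      rw [hU k, Finset.filter_ne', h1]
      have hUk : ∑ i ∈ (univ : Finset (Fin n)).erase k, 2 / ((x k : ℂ) - (x i : ℂ))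
          - ∑ l : Fin m, 4 / ((x k : ℂ) - ξ l)
          = 2 * (∑ i ∈ (univ : Finset (Fin n)).erase k, 1 / ((x k : ℂ) - (x i : ℂ)))
            - 4 * (∑ l : Fin m, 1 / ((x k : ℂ) - ξ l)) := by
        rw [Finset.mul_sum, Finset.mul_sum]
        congr 1
        · exact Finset.sum_congr rfl fun i _ => by ring
        · exact Finset.sum_congr rfl fun l _ => by ring
      rw [hUk]
      have h3 : (2 : ℂ) / (-(w k)) = -2 * (1 / w k) := by
        rw [div_neg, one_div, div_eq_mul_inv]; ring
      rw [h3]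
      ring
    rw [Finset.sum_congr rfl hterm, Finset.sum_add_distrib, ← Finset.mul_sum, ← Finset.mul_sum,
      hI1, hI2]
  have hlast : ∑ k ∈ Finset.univ.filter (· ≠ j), 6 / ((x k : ℂ) - (x j : ℂ)) ^ 2 = 6 * P := by
    rw [Finset.filter_ne', hP, Finset.mul_sum]
    refine Finset.sum_congr rfl fun k hk => ?_
    have h1 : ((x k : ℂ) - (x j : ℂ)) ^ 2 = (w k) ^ 2 := by rw [hw]; ring
    rw [h1]; ring
  rw [hUj, hmiddle, hlast]
  ring
end

section
/- Let x_1,...,x_n be distinct real numbers and ξ_1,...,ξ_m complex numbers satisfying the stationary relations. Define U_j = ∑_{k≠j} 2/(x_j - x_k) + ∑_{l=1}^m 4/(ξ_l - x_j). Then the second conformal Ward identity holds: ∑_{j=1}^n x_j U_j = (n - 2m)² - n - 4m. -/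
open Finset

lemma pair_sum {N : ℕ} (g : Fin N → Fin N → ℂ) (c : ℂ)
    (h : ∀ i j, i ≠ j → g i j + g j i = c) :
    2 * ∑ i : Fin N, ∑ j ∈ Finset.univ.filter (· ≠ i), g i j = c * N * (N - 1) := by
  have swap : ∑ i : Fin N, ∑ j ∈ Finset.univ.filter (· ≠ i), g i j
      = ∑ i : Fin N, ∑ j ∈ Finset.univ.filter (· ≠ i), g j i := by
    simp only [Finset.sum_filter]
    rw [Finset.sum_comm]
    refine Finset.sum_congr rfl fun i _ => Finset.sum_congr rfl fun j _ => ?_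
    simp [ne_comm]
  have key : 2 * ∑ i : Fin N, ∑ j ∈ Finset.univ.filter (· ≠ i), g i j
      = ∑ i : Fin N, ∑ j ∈ Finset.univ.filter (· ≠ i), (g i j + g j i) := by
    rw [two_mul]
    nth_rewrite 2 [swap]
    rw [← Finset.sum_add_distrib]
    exact Finset.sum_congr rfl fun i _ => (Finset.sum_add_distrib).symm
  rw [key]
  have : ∀ i : Fin N, ∑ j ∈ Finset.univ.filter (· ≠ i), (g i j + g j i)
      = ((N : ℂ) - 1) * c := by
    intro i
    rw [Finset.sum_congr rfl (fun j hj => h i j (Ne.symm (Finset.mem_filter.mp hj).2)), Finset.sum_const]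
    have hc : (Finset.univ.filter (· ≠ i)).card = N - 1 := by
      rw [Finset.filter_ne', Finset.card_erase_of_mem (Finset.mem_univ i)]
      simp
    rw [hc, nsmul_eq_mul]
    have hN : 1 ≤ N := Fin.pos i
    push_cast [Nat.cast_sub hN]
    ring
  rw [Finset.sum_congr rfl (fun i _ => this i), Finset.sum_const]
  simp [Finset.card_univ]
  ring

/-- second conformal Ward identity
`∑_j x_j U_j = (n-2m)² - n - 4m`. -/
theorem stmt_3 (n m : ℕ) (x : Fin n → ℝ) (ξ : Fin m → ℂ)
    (hx : Function.Injective x) (hξ : Function.Injective ξ)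
    (hxξ : ∀ j k, (x j : ℂ) ≠ ξ k)
    (hstat : ∀ k : Fin m,
      -∑ j : Fin n, 1 / (ξ k - (x j : ℂ))
        + ∑ l ∈ Finset.univ.filter (· ≠ k), 2 / (ξ k - ξ l) = 0)
    (U : Fin n → ℂ)
    (hU : ∀ j, U j = ∑ k ∈ Finset.univ.filter (· ≠ j), 2 / ((x j : ℂ) - (x k : ℂ))
        + ∑ l : Fin m, 4 / (ξ l - (x j : ℂ))) :
    ∑ j : Fin n, (x j : ℂ) * U j = ((n : ℂ) - 2 * m) ^ 2 - n - 4 * m := by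
  have hxC : ∀ i j : Fin n, i ≠ j → (x i : ℂ) - x j ≠ 0 := by
    intro i j hij
    exact sub_ne_zero.mpr (fun h => hij (hx (by exact_mod_cast h)))
  have hξC : ∀ i j : Fin m, i ≠ j → ξ i - ξ j ≠ 0 := by
    intro i j hij
    exact sub_ne_zero.mpr (fun h => hij (hξ h))
  have hxξ' : ∀ (l : Fin m) (j : Fin n), ξ l - (x j : ℂ) ≠ 0 :=
    fun l j => sub_ne_zero.mpr (Ne.symm (hxξ j l))
  -- Part A
  have hA : 2 * ∑ j : Fin n, ∑ k ∈ Finset.univ.filter (· ≠ j),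
      (x j : ℂ) * (2 / ((x j : ℂ) - x k)) = 2 * n * (n - 1) := by
    refine pair_sum _ 2 fun i j hij => ?_
    have h1 := hxC i j hij
    have h2 := hxC j i hij.symm
    field_simp
    ring
  -- stationary rewrite
  have hst : ∀ l : Fin m, ∑ j : Fin n, 1 / (ξ l - (x j : ℂ))
      = ∑ k ∈ Finset.univ.filter (· ≠ l), 2 / (ξ l - ξ k) := by
    intro l
    linear_combination -hstat l
  -- ξ pair sum
  have hXi : 2 * ∑ k : Fin m, ∑ l ∈ Finset.univ.filter (· ≠ k),
      ξ k * (2 / (ξ k - ξ l)) = 2 * m * (m - 1) := by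
    refine pair_sum _ 2 fun i j hij => ?_
    have h1 := hξC i j hij
    have h2 := hξC j i hij.symm
    field_simp
    ring
  -- Part B inner
  have hB : ∀ l : Fin m, ∑ j : Fin n, (x j : ℂ) * (4 / (ξ l - x j))
      = 4 * (-(n : ℂ) + ∑ k ∈ Finset.univ.filter (· ≠ l), ξ l * (2 / (ξ l - ξ k))) := by
    intro l
    have step : ∀ j : Fin n, (x j : ℂ) * (4 / (ξ l - x j))
        = 4 * (-1 + ξ l * (1 / (ξ l - x j))) := by
      intro j
      have h := hxξ' l j
      field_simp
      ring
    rw [Finset.sum_congr rfl (fun j _ => step j), ← Finset.mul_sum, Finset.sum_add_distrib,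
      ← Finset.mul_sum, hst l, Finset.sum_const, Finset.card_univ, Finset.mul_sum]
    simp only [Fintype.card_fin, nsmul_eq_mul, mul_neg_one]
  -- assemble
  have expand : ∑ j : Fin n, (x j : ℂ) * U j
      = (∑ j : Fin n, ∑ k ∈ Finset.univ.filter (· ≠ j), (x j : ℂ) * (2 / ((x j : ℂ) - x k)))
        + ∑ l : Fin m, ∑ j : Fin n, (x j : ℂ) * (4 / (ξ l - x j)) := by
    calc ∑ j : Fin n, (x j : ℂ) * U j
        = ∑ j : Fin n, ((∑ k ∈ Finset.univ.filter (· ≠ j), (x j : ℂ) * (2 / ((x j : ℂ) - x k)))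
            + ∑ l : Fin m, (x j : ℂ) * (4 / (ξ l - x j))) :=
          Finset.sum_congr rfl fun j _ => by rw [hU j, mul_add, Finset.mul_sum, Finset.mul_sum]
      _ = (∑ j : Fin n, ∑ k ∈ Finset.univ.filter (· ≠ j), (x j : ℂ) * (2 / ((x j : ℂ) - x k)))
            + ∑ j : Fin n, ∑ l : Fin m, (x j : ℂ) * (4 / (ξ l - x j)) := Finset.sum_add_distrib
      _ = _ := by rw [Finset.sum_comm]
  rw [expand, Finset.sum_congr rfl (fun l _ => hB l), ← Finset.mul_sum,
    Finset.sum_add_distrib, Finset.sum_const, Finset.card_univ]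
  simp only [Fintype.card_fin, nsmul_eq_mul]
  have e1 : ∑ j : Fin n, ∑ k ∈ Finset.univ.filter (· ≠ j),
      (x j : ℂ) * (2 / ((x j : ℂ) - x k)) = (2 * n * (n-1)) / 2 := by
    linear_combination hA / 2
  have e2 : ∑ k : Fin m, ∑ l ∈ Finset.univ.filter (· ≠ k),
      ξ k * (2 / (ξ k - ξ l)) = (2 * m * (m-1)) / 2 := by
    linear_combination hXi / 2
  rw [e1, e2]
  ring
end

section
/- Let x_1,...,x_n be distinct real numbers and ξ_1,...,ξ_m distinct complex numbers, distinct from the x_j. The rational function f(z) = ∏_{j=1}^n (z - x_j) / ∏_{k=1}^m (z - ξ_k)² has a rational primitive (i.e., there exists a rational function R with R' = f) if and only if for every k = 1,...,m, ∑_{j=1}^n 1/(ξ_k - x_j) - ∑_{l≠k} 2/(ξ_k - ξ_l) = 0. -/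
open Finset Polynomial

lemma aux_deriv_prod {ι : Type*} [DecidableEq ι] (s : Finset ι) (c : ι → ℂ) :
    derivative (∏ i ∈ s, (X - C (c i))) = ∑ i ∈ s, ∏ j ∈ s.erase i, (X - C (c j)) := by
  induction s using Finset.induction_on with
  | empty => simp
  | @insert a s ha ih =>
    rw [Finset.prod_insert ha, derivative_mul, derivative_X_sub_C, ih, Finset.sum_insert ha,
      Finset.erase_insert ha, one_mul, Finset.mul_sum]
    congr 1
    refine Finset.sum_congr rfl fun i hi => ?_
    rw [Finset.erase_insert_of_ne (by rintro rfl; exact ha hi), Finset.prod_insert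
      (by intro h; exact ha (Finset.mem_of_mem_erase h))]

lemma aux_sum_inv {ι : Type*} [DecidableEq ι] (s : Finset ι) (c : ι → ℂ) (a : ℂ)
    (h : ∀ i ∈ s, a - c i ≠ 0) :
    ∑ i ∈ s, 1 / (a - c i)
      = (derivative (∏ i ∈ s, (X - C (c i)))).eval a / (∏ i ∈ s, (X - C (c i))).eval a := by
  rw [aux_deriv_prod, eval_finset_sum, Finset.sum_div]
  refine Finset.sum_congr rfl fun i hi => ?_
  have hprod : ∏ j ∈ s.erase i, (a - c j) ≠ 0 :=
    Finset.prod_ne_zero_iff.mpr fun j hj => h j (Finset.mem_of_mem_erase hj)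
  simp only [eval_prod, eval_sub, eval_X, eval_C]
  rw [← Finset.mul_prod_erase s (fun j => a - c j) hi, mul_comm (a - c i), ← div_div,
    div_self hprod]

lemma aux_antideriv (S : ℂ[X]) : ∃ T : ℂ[X], derivative T = S := by
  induction S using Polynomial.induction_on' with
  | add p q hp hq =>
    obtain ⟨T1, h1⟩ := hp; obtain ⟨T2, h2⟩ := hq
    exact ⟨T1 + T2, by rw [derivative_add, h1, h2]⟩
  | monomial n a =>
    refine ⟨C (a / (n + 1)) * X ^ (n + 1), ?_⟩
    rw [derivative_C_mul_X_pow, ← C_mul_X_pow_eq_monomial, Nat.add_sub_cancel]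
    push_cast
    rw [div_mul_cancel₀ a (Nat.cast_add_one_ne_zero n)]

lemma aux_sq_dvd {p : ℂ[X]} (a : ℂ) (h0 : p.eval a = 0) (h1 : (derivative p).eval a = 0) :
    (X - C a) ^ 2 ∣ p := by
  obtain ⟨q, rfl⟩ := (dvd_iff_isRoot.mpr h0)
  have hq : q.eval a = 0 := by
    simpa [derivative_mul, derivative_X_sub_C, eval_mul, eval_add, eval_sub, eval_X, eval_C]
      using h1
  obtain ⟨r, rfl⟩ := (dvd_iff_isRoot.mpr hq)
  exact ⟨r, by ring⟩

lemma aux_fac (a : ℂ) (p q' : ℕ) (P₀ Q₀ : ℂ[X]) :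
    derivative ((X - C a) ^ p * P₀) * ((X - C a) ^ (q' + 1) * Q₀)
      - ((X - C a) ^ p * P₀) * derivative ((X - C a) ^ (q' + 1) * Q₀)
      = (X - C a) ^ (p + q') *
        (C ((p : ℂ) - ((q' : ℂ) + 1)) * P₀ * Q₀
          + (X - C a) * (derivative P₀ * Q₀ - P₀ * derivative Q₀)) := by
  cases p with
  | zero =>
    simp only [pow_zero, one_mul, derivative_mul, derivative_pow, derivative_X_sub_C, derivative_X, derivative_C,
      Nat.add_sub_cancel, Nat.cast_zero, Nat.cast_add, Nat.cast_one, zero_add, map_sub, map_add,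
      map_zero, map_one, mul_one]
    ring
  | succ p'' =>
    simp only [derivative_mul, derivative_pow, derivative_X_sub_C, derivative_X, derivative_C, Nat.add_sub_cancel,
      Nat.cast_add, Nat.cast_one, map_sub, map_add, map_one, mul_one]
    ring

/-- `f(z) = ∏_j (z-x_j) / ∏_k (z-ξ_k)²` has a rational primitive
iff the stationary-type relations hold at every pole. -/
theorem stmt_5 (n m : ℕ) (x : Fin n → ℝ) (ξ : Fin m → ℂ)
    (hx : Function.Injective x) (hξ : Function.Injective ξ)
    (hxξ : ∀ j k, (x j : ℂ) ≠ ξ k) :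
    (∃ P Q : Polynomial ℂ, Q ≠ 0 ∧ ∀ z : ℂ, Q.eval z ≠ 0 → (∀ k, z ≠ ξ k) →
        HasDerivAt (fun w => P.eval w / Q.eval w)
          ((∏ j : Fin n, (z - (x j : ℂ))) / (∏ k : Fin m, (z - ξ k) ^ 2)) z)
      ↔ ∀ k : Fin m,
          ∑ j : Fin n, 1 / (ξ k - (x j : ℂ))
            - ∑ l ∈ Finset.univ.filter (· ≠ k), 2 / (ξ k - ξ l) = 0 := by
  classical
  set N : Polynomial ℂ := ∏ j : Fin n, (X - C (x j : ℂ)) with hN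
  set E : Fin m → Polynomial ℂ := fun k => ∏ l ∈ Finset.univ.erase k, (X - C (ξ l)) with hE
  set D : Polynomial ℂ := ∏ k : Fin m, (X - C (ξ k)) with hD
  have hDE : ∀ k, D = (X - C (ξ k)) * E k := fun k =>
    (Finset.mul_prod_erase Finset.univ _ (Finset.mem_univ k)).symm
  have hNev : ∀ z : ℂ, N.eval z = ∏ j : Fin n, (z - (x j : ℂ)) := by
    intro z; simp [hN, eval_prod]
  have hDev : ∀ z : ℂ, D.eval z = ∏ k : Fin m, (z - ξ k) := by
    intro z; simp [hD, eval_prod]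
  have hNa : ∀ k, N.eval (ξ k) ≠ 0 := by
    intro k
    rw [hNev]
    exact Finset.prod_ne_zero_iff.mpr fun j _ => sub_ne_zero.mpr fun h => hxξ j k h.symm
  have hEa : ∀ k, (E k).eval (ξ k) ≠ 0 := by
    intro k
    rw [hE]
    simp only [eval_prod, eval_sub, eval_X, eval_C]
    exact Finset.prod_ne_zero_iff.mpr fun l hl =>
      sub_ne_zero.mpr fun h => (Finset.ne_of_mem_erase hl) (hξ h.symm)
  have hEa0 : ∀ k l, l ≠ k → (E l).eval (ξ k) = 0 := by
    intro k l hlk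
    rw [hE]
    simp only [eval_prod, eval_sub, eval_X, eval_C]
    exact Finset.prod_eq_zero (Finset.mem_erase.mpr ⟨hlk.symm, Finset.mem_univ k⟩) (sub_self _)
  have hN0 : N ≠ 0 :=
    (monic_prod_of_monic _ _ fun j _ => monic_X_sub_C ((x j : ℂ))).ne_zero
  have hD0 : D ≠ 0 :=
    (monic_prod_of_monic _ _ fun k _ => monic_X_sub_C (ξ k)).ne_zero
  -- residue condition in polynomial form
  have hcond : ∀ k, (∑ j : Fin n, 1 / (ξ k - (x j : ℂ))
        - ∑ l ∈ Finset.univ.filter (· ≠ k), 2 / (ξ k - ξ l) = 0)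
      ↔ (derivative N).eval (ξ k) * (E k).eval (ξ k)
          - 2 * N.eval (ξ k) * (derivative (E k)).eval (ξ k) = 0 := by
    intro k
    have h1 : ∑ j : Fin n, 1 / (ξ k - (x j : ℂ))
        = (derivative N).eval (ξ k) / N.eval (ξ k) := by
      rw [hN]
      exact aux_sum_inv Finset.univ (fun j => (x j : ℂ)) (ξ k)
        (fun j _ => sub_ne_zero.mpr fun h => hxξ j k h.symm)
    have h2 : ∑ l ∈ Finset.univ.filter (· ≠ k), 2 / (ξ k - ξ l)
        = 2 * ((derivative (E k)).eval (ξ k) / (E k).eval (ξ k)) := by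
      rw [Finset.filter_ne']
      have : ∑ l ∈ Finset.univ.erase k, 2 / (ξ k - ξ l)
          = 2 * ∑ l ∈ Finset.univ.erase k, 1 / (ξ k - ξ l) := by
        rw [Finset.mul_sum]
        exact Finset.sum_congr rfl fun l _ => by rw [mul_one_div]
      rw [this, hE]
      congr 1
      exact aux_sum_inv (Finset.univ.erase k) ξ (ξ k)
        (fun l hl => sub_ne_zero.mpr fun h => (Finset.ne_of_mem_erase hl) (hξ h.symm))
    have key : (derivative N).eval (ξ k) / N.eval (ξ k)
          - 2 * ((derivative (E k)).eval (ξ k) / (E k).eval (ξ k))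
        = ((derivative N).eval (ξ k) * (E k).eval (ξ k)
            - 2 * N.eval (ξ k) * (derivative (E k)).eval (ξ k))
          / (N.eval (ξ k) * (E k).eval (ξ k)) := by
      field_simp [hNa k, hEa k]
    rw [h1, h2, key, _root_.div_eq_zero_iff]
    simp [mul_ne_zero (hNa k) (hEa k)]
  constructor
  · rintro ⟨P, Q, hQ0, hPQ⟩ k
    have hLR : (derivative P * Q - P * derivative Q) * D ^ 2 = N * Q ^ 2 := by
      apply Polynomial.eq_of_infinite_eval_eq
      refine Set.Infinite.mono ?_ (Set.Finite.infinite_compl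
        ((Q.finite_setOf_isRoot hQ0).union (Set.finite_range ξ)))
      intro z hz
      simp only [Set.mem_compl_iff, Set.mem_union, Set.mem_setOf_eq, Set.mem_range, not_or,
        not_exists] at hz
      obtain ⟨hz1, hz2⟩ := hz
      have hQz : Q.eval z ≠ 0 := hz1
      have hzk : ∀ k, z ≠ ξ k := fun k h => hz2 k h.symm
      have h1 := hPQ z hQz hzk
      have h2 := (Polynomial.hasDerivAt P z).div (Polynomial.hasDerivAt Q z) hQz
      have h3 := h1.unique h2
      have hprod : (∏ k : Fin m, (z - ξ k) ^ 2) ≠ 0 :=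
        Finset.prod_ne_zero_iff.mpr fun k _ => pow_ne_zero _ (sub_ne_zero.mpr (hzk k))
      rw [div_eq_div_iff hprod (pow_ne_zero 2 hQz)] at h3
      simp only [Set.mem_setOf_eq, eval_mul, eval_sub, eval_pow]
      rw [hDev, hNev]
      rw [Finset.prod_pow] at h3
      linear_combination -h3
    rw [hcond k]
    have hP0 : P ≠ 0 := by
      rintro rfl
      simp only [derivative_zero, zero_mul, mul_zero, zero_sub, neg_zero, sub_zero] at hLR
      exact (mul_ne_zero hN0 (pow_ne_zero 2 hQ0)) hLR.symm
    have hQa : Q.eval (ξ k) = 0 := by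
      have h := congrArg (eval (ξ k)) hLR
      have hDa : D.eval (ξ k) = 0 := by
        rw [hDev]; exact Finset.prod_eq_zero (Finset.mem_univ k) (sub_self _)
      simp only [eval_mul, eval_pow, eval_sub, hDa] at h
      have h2 : eval (ξ k) N * eval (ξ k) Q ^ 2 = 0 := by linear_combination -h
      rcases mul_eq_zero.mp h2 with h' | h'
      · exact absurd h' (hNa k)
      · exact pow_eq_zero_iff two_ne_zero |>.mp h'
    obtain ⟨p, P₀, hPfac, hP₀a⟩ : ∃ p P₀, (X - C (ξ k)) ^ p * P₀ = P ∧ P₀.eval (ξ k) ≠ 0 :=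
      ⟨_, _, P.pow_mul_divByMonic_rootMultiplicity_eq (ξ k),
        eval_divByMonic_pow_rootMultiplicity_ne_zero (ξ k) hP0⟩
    obtain ⟨q', Q₀, hQfac, hQ₀a⟩ : ∃ q' Q₀, (X - C (ξ k)) ^ (q' + 1) * Q₀ = Q
        ∧ Q₀.eval (ξ k) ≠ 0 := by
      have h1 := (rootMultiplicity_pos hQ0).mpr hQa
      obtain ⟨q', hq'⟩ : ∃ q', rootMultiplicity (ξ k) Q = q' + 1 := ⟨rootMultiplicity (ξ k) Q - 1, by omega⟩
      exact ⟨q', _, by rw [← hq']; exact Q.pow_mul_divByMonic_rootMultiplicity_eq (ξ k),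
        eval_divByMonic_pow_rootMultiplicity_ne_zero (ξ k) hQ0⟩
    have hfac : derivative P * Q - P * derivative Q = (X - C (ξ k)) ^ (p + q') *
        (C ((p : ℂ) - ((q' : ℂ) + 1)) * P₀ * Q₀
          + (X - C (ξ k)) * (derivative P₀ * Q₀ - P₀ * derivative Q₀)) := by
      rw [← hPfac, ← hQfac]
      exact aux_fac (ξ k) p q' P₀ Q₀
    have hbig : (X - C (ξ k)) ^ (p + q' + 2) *
        ((C ((p : ℂ) - ((q' : ℂ) + 1)) * P₀ * Q₀
          + (X - C (ξ k)) * (derivative P₀ * Q₀ - P₀ * derivative Q₀)) * E k ^ 2)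
        = (X - C (ξ k)) ^ (2 * q' + 2) * (N * Q₀ ^ 2) := by
      have h := hLR
      rw [hfac, hDE k, ← hQfac] at h
      linear_combination h
    have htne : (X - C (ξ k)) ≠ (0 : Polynomial ℂ) := X_sub_C_ne_zero (ξ k)
    rcases lt_trichotomy p q' with hpq | rfl | hpq
    · exfalso
      obtain ⟨r, hr⟩ : ∃ r, 2 * q' + 2 = (p + q' + 2) + (r + 1) := ⟨q' - p - 1, by omega⟩
      have hc : (C ((p : ℂ) - ((q' : ℂ) + 1)) * P₀ * Q₀
            + (X - C (ξ k)) * (derivative P₀ * Q₀ - P₀ * derivative Q₀)) * E k ^ 2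
          = (X - C (ξ k)) ^ (r + 1) * (N * Q₀ ^ 2) := by
        apply mul_left_cancel₀ (pow_ne_zero (p + q' + 2) htne)
        rw [hbig, hr, pow_add]; ring
      have h := congrArg (eval (ξ k)) hc
      simp only [eval_mul, eval_add, eval_sub, eval_pow, eval_C, eval_X, sub_self, zero_mul,
        add_zero] at h
      rw [zero_pow (Nat.succ_ne_zero r), zero_mul] at h
      have hpc : ((p : ℂ) - ((q' : ℂ) + 1)) ≠ 0 := by
        intro h0
        have h1 : (p : ℂ) = (q' : ℂ) + 1 := sub_eq_zero.mp h0
        have h2 : p = q' + 1 := by exact_mod_cast h1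
        omega
      exact (mul_ne_zero (mul_ne_zero (mul_ne_zero hpc hP₀a) hQ₀a)
        (pow_ne_zero 2 (hEa k))) h
    · have hc : (C ((p : ℂ) - ((p : ℂ) + 1)) * P₀ * Q₀
            + (X - C (ξ k)) * (derivative P₀ * Q₀ - P₀ * derivative Q₀)) * E k ^ 2
          = N * Q₀ ^ 2 := by
        apply mul_left_cancel₀ (pow_ne_zero (p + p + 2) htne)
        rw [hbig]; ring
      have hα := congrArg (eval (ξ k)) hc
      simp only [eval_mul, eval_add, eval_sub, eval_pow, eval_C, eval_X, sub_self, zero_mul,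
        add_zero] at hα
      have hβ := congrArg (eval (ξ k)) (congrArg derivative hc)
      simp only [derivative_mul, derivative_add, derivative_sub, derivative_pow,
        derivative_X_sub_C, derivative_C, derivative_X, eval_mul, eval_add, eval_sub, eval_pow,
        eval_C, eval_X, eval_one, eval_zero, sub_self, zero_mul, mul_zero, add_zero, zero_add,
        sub_zero, one_mul, mul_one, Nat.cast_ofNat, pow_one] at hβ
      have hkey : (eval (ξ k) Q₀) ^ 3 * (eval (ξ k) (derivative N) * eval (ξ k) (E k)
          - 2 * eval (ξ k) N * eval (ξ k) (derivative (E k))) = 0 := by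
        linear_combination (-(eval (ξ k) Q₀ * eval (ξ k) (E k))) * hβ
          + (2 * eval (ξ k) (derivative Q₀) * eval (ξ k) (E k)
            + 2 * eval (ξ k) Q₀ * eval (ξ k) (derivative (E k))) * hα
      rcases mul_eq_zero.mp hkey with h' | h'
      · exact absurd h' (pow_ne_zero 3 hQ₀a)
      · exact h'
    · exfalso
      obtain ⟨r, hr⟩ : ∃ r, p + q' + 2 = (2 * q' + 2) + (r + 1) := ⟨p - q' - 1, by omega⟩
      have hc : (X - C (ξ k)) ^ (r + 1) *
          ((C ((p : ℂ) - ((q' : ℂ) + 1)) * P₀ * Q₀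
            + (X - C (ξ k)) * (derivative P₀ * Q₀ - P₀ * derivative Q₀)) * E k ^ 2)
          = N * Q₀ ^ 2 := by
        apply mul_left_cancel₀ (pow_ne_zero (2 * q' + 2) htne)
        rw [← hbig, hr, pow_add]; ring
      have h := congrArg (eval (ξ k)) hc
      simp only [eval_mul, eval_add, eval_sub, eval_pow, eval_C, eval_X, sub_self, zero_mul,
        add_zero] at h
      rw [zero_pow (Nat.succ_ne_zero r), zero_mul] at h
      exact (mul_ne_zero (hNa k) (pow_ne_zero 2 hQ₀a)) h.symm
  · intro hres
    have hres' : ∀ k, (derivative N).eval (ξ k) * (E k).eval (ξ k)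
        - 2 * N.eval (ξ k) * (derivative (E k)).eval (ξ k) = 0 :=
      fun k => (hcond k).mp (hres k)
    set A : Fin m → ℂ := fun k => N.eval (ξ k) / ((E k).eval (ξ k)) ^ 2 with hA
    set F : Polynomial ℂ := N - ∑ k : Fin m, C (A k) * (E k) ^ 2 with hF
    have hFk : ∀ k, (X - C (ξ k)) ^ 2 ∣ F := by
      intro k
      apply aux_sq_dvd
      · rw [hF]
        simp only [eval_sub, eval_finset_sum, eval_mul, eval_pow, eval_C]
        rw [Finset.sum_eq_single k (fun l _ hlk => by rw [hEa0 k l hlk]; ring)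
          (fun h => absurd (Finset.mem_univ k) h)]
        rw [hA]
        field_simp [hEa k]
        ring
      · rw [hF, derivative_sub, map_sum]
        simp only [derivative_C_mul, derivative_pow, eval_sub, eval_finset_sum, eval_mul,
          eval_pow, eval_C, Nat.cast_ofNat, pow_one]
        rw [Finset.sum_eq_single k (fun l _ hlk => by rw [hEa0 k l hlk]; ring)
          (fun h => absurd (Finset.mem_univ k) h)]
        have h := hres' k
        rw [hA]
        field_simp [hEa k]
        linear_combination (eval (ξ k) (E k)) * h
    have hDF : D ^ 2 ∣ F := by
      have hDsq : D ^ 2 = ∏ k : Fin m, (X - C (ξ k)) ^ 2 := by rw [hD, Finset.prod_pow]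
      rw [hDsq]
      apply Finset.prod_dvd_of_coprime
      · intro i _ j hj hij
        exact ((Polynomial.pairwise_coprime_X_sub_C hξ) hij).pow
      · exact fun k _ => hFk k
    obtain ⟨S, hS⟩ := hDF
    obtain ⟨T, hT⟩ := aux_antideriv S
    refine ⟨-(∑ k : Fin m, C (A k) * E k) + T * D, D, hD0, ?_⟩
    intro z hQz hzk
    have hED : ∀ k, E k * derivative D - derivative (E k) * D = (E k) ^ 2 := by
      intro k
      have h1 : derivative D = E k + (X - C (ξ k)) * derivative (E k) := by
        rw [hDE k, derivative_mul, derivative_X_sub_C]; ring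
      rw [h1, hDE k]; ring
    have hGder : derivative (∑ k : Fin m, C (A k) * E k)
        = ∑ k : Fin m, C (A k) * derivative (E k) := by
      rw [map_sum]
      exact Finset.sum_congr rfl fun k _ => derivative_C_mul _ _
    have hGD : (∑ k : Fin m, C (A k) * E k) * derivative D
        - (∑ k : Fin m, C (A k) * derivative (E k)) * D
        = ∑ k : Fin m, C (A k) * (E k) ^ 2 := by
      rw [Finset.sum_mul, Finset.sum_mul, ← Finset.sum_sub_distrib]
      exact Finset.sum_congr rfl fun k _ => by linear_combination (C (A k)) * hED k
    have hS' : N - ∑ k : Fin m, C (A k) * (E k) ^ 2 = D ^ 2 * S := by rw [← hF]; exact hS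
    have hkey : derivative (-(∑ k : Fin m, C (A k) * E k) + T * D) * D
        - (-(∑ k : Fin m, C (A k) * E k) + T * D) * derivative D = N := by
      rw [derivative_add, derivative_neg, hGder, derivative_mul, hT]
      linear_combination hGD - hS'
    have h1 := (Polynomial.hasDerivAt (-(∑ k : Fin m, C (A k) * E k) + T * D) z).div
      (Polynomial.hasDerivAt D z) hQz
    have hnum := congrArg (eval z) hkey
    simp only [eval_mul, eval_sub] at hnum
    have hden : (D.eval z) ^ 2 = ∏ k : Fin m, (z - ξ k) ^ 2 := by
      rw [hDev, Finset.prod_pow]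
    rw [hnum, hNev z, hden] at h1
    exact h1
end

section
/- Define f_{jk} = 2/(x_j - x_k) for j ≠ k and f_{jj} = 0, for distinct real numbers x_1,...,x_n. Let U_j satisfy the null vector equations (1/2)U_j² + ∑_k f_{kj} U_k - ∑_k (3/2) f_{jk}² = 0, and set p_j = U_j + ∑_{k≠j} f_{jk}. Then p_j satisfies H_j(x,p) = 0, where H_j(x,p) = (1/2)p_j² - ∑_k (p_j + p_k) f_{jk} + ∑_k ∑_{l≠k} f_{jk} f_{jl} - 2∑_k f_{jk}². -/
open Finset

/-- the change of variables `p_j = U_j + ∑_{k≠j} f_{jk}` turns the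
null vector equations into `H_j(x,p) = 0`. -/
theorem stmt_9 (n : ℕ) (x U p : Fin n → ℝ) (hx : Function.Injective x)
    (f : Fin n → Fin n → ℝ)
    (hf : ∀ j k, f j k = if j = k then 0 else 2 / (x j - x k))
    (hnull : ∀ j, (1 / 2) * (U j) ^ 2 + ∑ k : Fin n, f k j * U k
      - ∑ k : Fin n, (3 / 2) * (f j k) ^ 2 = 0)
    (hp : ∀ j, p j = U j + ∑ k ∈ Finset.univ.filter (· ≠ j), f j k) :
    ∀ j, (1 / 2) * (p j) ^ 2 - ∑ k : Fin n, (p j + p k) * f j k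
      + ∑ k : Fin n, ∑ l ∈ Finset.univ.filter (· ≠ k), f j k * f j l
      - 2 * ∑ k : Fin n, (f j k) ^ 2 = 0 := by
  intro j
  have hf0 : ∀ a : Fin n, f a a = 0 := fun a => by simp [hf]
  have hanti : ∀ a b : Fin n, f b a = - f a b := by
    intro a b
    by_cases h : a = b
    · subst h; simp [hf0]
    · rw [hf a b, hf b a, if_neg h, if_neg (Ne.symm h), ← neg_sub (x a) (x b),
        div_neg]
  have hxne : ∀ a b : Fin n, a ≠ b → x a - x b ≠ 0 := by
    intro a b h
    exact sub_ne_zero.mpr (fun hh => h (hx hh))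
  -- remove filters: for any a, ∑_{k ≠ a} g k = ∑ k g k whenever g a = 0
  have hfilt : ∀ (a : Fin n) (g : Fin n → ℝ), g a = 0 →
      ∑ k ∈ Finset.univ.filter (· ≠ a), g k = ∑ k : Fin n, g k := by
    intro a g hg
    rw [Finset.filter_ne', Finset.sum_erase_eq_sub (Finset.mem_univ a), hg, sub_zero]
  have hp' : ∀ a : Fin n, p a = U a + ∑ k : Fin n, f a k := by
    intro a
    rw [hp a, hfilt a (f a) (hf0 a)]
  -- pointwise key identity
  have hpt : ∀ k l : Fin n, f j k * f k l + f j l * f l k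
      = f j k * f j l - (if k = l then (f j k)^2 else 0)
        - (if k = j then (f j l)^2 else 0) - (if l = j then (f j k)^2 else 0) := by
    intro k l
    by_cases hkl : k = l
    · subst hkl
      by_cases hkj : k = j
      · subst hkj
        simp [hf0]
      · simp only [hf0, mul_zero, zero_mul, add_zero, if_pos rfl, if_true, if_neg hkj, sub_zero]
        ring
    · by_cases hkj : k = j
      · subst hkj
        simp only [hf0, zero_mul, mul_zero, zero_add, if_neg hkl, if_pos rfl, if_true,
          if_neg (Ne.symm hkl), sub_zero, zero_sub]
        rw [hanti k l]
        ring
      · by_cases hlj : l = j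
        · subst hlj
          simp only [hf0, zero_mul, mul_zero, add_zero, if_neg hkl, if_neg hkj,
            if_pos rfl, if_true, sub_zero]
          rw [hanti l k]
          ring
        · simp only [if_neg hkl, if_neg hkj, if_neg hlj, sub_zero]
          rw [hf j k, hf k l, hf j l, if_neg (Ne.symm hkj), if_neg hkl,
            if_neg (Ne.symm hlj), hanti k l, hf k l, if_neg hkl]
          have h1 := hxne j k (Ne.symm hkj)
          have h2 := hxne k l hkl
          have h3 := hxne j l (Ne.symm hlj)
          field_simp
          ring
  -- the key double-sum identity
  have key : 2 * (∑ k : Fin n, ∑ l : Fin n, f j k * f k l)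
      = (∑ k : Fin n, f j k) * (∑ k : Fin n, f j k)
        - 3 * ∑ k : Fin n, (f j k)^2 := by
    have hsw : (∑ k : Fin n, ∑ l : Fin n, f j k * f k l)
        = ∑ k : Fin n, ∑ l : Fin n, f j l * f l k := Finset.sum_comm ..
    have h2T : 2 * (∑ k : Fin n, ∑ l : Fin n, f j k * f k l)
        = ∑ k : Fin n, ∑ l : Fin n, (f j k * f k l + f j l * f l k) := by
      simp only [Finset.sum_add_distrib]
      rw [← hsw, two_mul]
    rw [h2T]
    have : ∑ k : Fin n, ∑ l : Fin n, (f j k * f k l + f j l * f l k)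
        = ∑ k : Fin n, ∑ l : Fin n, (f j k * f j l - (if k = l then (f j k)^2 else 0)
          - (if k = j then (f j l)^2 else 0) - (if l = j then (f j k)^2 else 0)) := by
      apply Finset.sum_congr rfl; intro k _
      apply Finset.sum_congr rfl; intro l _
      exact hpt k l
    rw [this]
    simp only [Finset.sum_sub_distrib]
    rw [← Finset.sum_mul_sum]
    have e1 : ∑ k : Fin n, ∑ l : Fin n, (if k = l then (f j k)^2 else 0)
        = ∑ k : Fin n, (f j k)^2 := by
      apply Finset.sum_congr rfl; intro k _
      simp
    have e2 : ∑ k : Fin n, ∑ l : Fin n, (if k = j then (f j l)^2 else 0)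
        = ∑ l : Fin n, (f j l)^2 := by
      rw [Finset.sum_comm]
      apply Finset.sum_congr rfl; intro l _
      simp
    have e3 : ∑ k : Fin n, ∑ l : Fin n, (if l = j then (f j k)^2 else 0)
        = ∑ k : Fin n, (f j k)^2 := by
      apply Finset.sum_congr rfl; intro k _
      simp
    rw [e1, e2, e3]
    ring
  -- rewrite the null vector equation
  have hnull' : (1 / 2) * (U j) ^ 2 - (∑ k : Fin n, f j k * U k)
      - (3 / 2) * ∑ k : Fin n, (f j k)^2 = 0 := by
    have h1 : ∑ k : Fin n, f k j * U k = - ∑ k : Fin n, f j k * U k := by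
      rw [← Finset.sum_neg_distrib]
      apply Finset.sum_congr rfl; intro k _
      rw [hanti j k]; ring
    have h2 : ∑ k : Fin n, (3/2 : ℝ) * (f j k)^2 = (3/2) * ∑ k : Fin n, (f j k)^2 := by
      rw [Finset.mul_sum]
    have := hnull j
    rw [h1, h2] at this
    linarith
  -- rewrite goal sums
  have g1 : ∑ k : Fin n, (p j + p k) * f j k
      = p j * (∑ k : Fin n, f j k) + (∑ k : Fin n, f j k * U k)
        + ∑ k : Fin n, ∑ l : Fin n, f j k * f k l := by
    have : ∀ k : Fin n, (p j + p k) * f j k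
        = p j * f j k + (f j k * U k + ∑ l : Fin n, f j k * f k l) := by
      intro k
      rw [hp' k, ← Finset.mul_sum]
      ring
    rw [Finset.sum_congr rfl (fun k _ => this k)]
    simp only [Finset.sum_add_distrib, ← Finset.mul_sum]
    ring
  have g2 : ∑ k : Fin n, ∑ l ∈ Finset.univ.filter (· ≠ k), f j k * f j l
      = (∑ k : Fin n, f j k) * (∑ k : Fin n, f j k) - ∑ k : Fin n, (f j k)^2 := by
    have : ∀ k : Fin n, ∑ l ∈ Finset.univ.filter (· ≠ k), f j k * f j l
        = (∑ l : Fin n, f j k * f j l) - (f j k)^2 := by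
      intro k
      rw [Finset.filter_ne', Finset.sum_erase_eq_sub (Finset.mem_univ k)]
      ring_nf
    rw [Finset.sum_congr rfl (fun k _ => this k)]
    rw [Finset.sum_sub_distrib, ← Finset.sum_mul_sum]
  rw [g1, g2, hp' j]
  linear_combination hnull' - (1/2) * key
end

section
/- Let x_1,...,x_n be distinct real numbers and ξ_1,...,ξ_m distinct complex numbers disjoint from the x_j. Suppose g_t, x_j(t), ξ_l(t) evolve under the multiple chordal Loewner flow with measurable parametrization ν_j(t) ≥ 0: ∂_t g_t(z) = ∑_j 2ν_j(t)/(g_t(z) - x_j(t)), ẋ_j = ν_j(t)(∑_{k≠j} 2/(x_j-x_k) - ∑_l 4/(x_j-ξ_l)) + ∑_{k≠j} 2ν_k(t)/(x_j - x_k), ξ̇_l = ∑_j 2ν_j(t)/(ξ_l - x_j). Then N_t(z) = g_t'(z) · ∏_k (g_t(z) - x_k(t)) / ∏_l (g_t(z) - ξ_l(t))² is constant in t. -/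
open Finset

lemma two_pt_x {a p q : ℂ} (hap : a - p ≠ 0) (haq : a - q ≠ 0) (hpq : p - q ≠ 0) {c : ℂ} :
    c / ((a - p) * (a - q)) - c / ((p - q) * (a - p)) - c / ((q - p) * (a - q)) = 0 := by
  have hqp : q - p ≠ 0 := fun h => hpq (by linear_combination -h)
  field_simp
  ring

lemma two_pt_xi {a p w : ℂ} (hap : a - p ≠ 0) (haw : a - w ≠ 0) (hpw : p - w ≠ 0) {c : ℂ} :
    c / ((p - w) * (a - p)) - c / ((a - p) * (a - w)) + c / ((w - p) * (a - w)) = 0 := by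
  have hwp : w - p ≠ 0 := fun h => hpw (by linear_combination -h)
  field_simp
  ring

lemma key (n m : ℕ) (a : ℂ) (x : Fin n → ℂ) (ξ : Fin m → ℂ) (b : Fin n → ℂ)
    (hax : ∀ k, a - x k ≠ 0) (haξ : ∀ l, a - ξ l ≠ 0)
    (hxx : ∀ i k, i ≠ k → x i - x k ≠ 0) (hxξ : ∀ k l, x k - ξ l ≠ 0) :
    ((∑ j, -(2 * b j) / (a - x j) ^ 2)
      + ∑ k, ((∑ j, 2 * b j / (a - x j))
          - (b k * ((∑ i ∈ univ.filter (· ≠ k), 2 / (x k - x i)) - ∑ l, 4 / (x k - ξ l))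
            + ∑ i ∈ univ.filter (· ≠ k), 2 * b i / (x k - x i))) / (a - x k))
      - ∑ l, 2 * ((∑ j, 2 * b j / (a - x j)) - ∑ j, 2 * b j / (ξ l - x j)) / (a - ξ l)
      = 0 := by
  classical
  have hmid : ∀ k : Fin n, ((∑ j, 2 * b j / (a - x j))
          - (b k * ((∑ i ∈ univ.filter (· ≠ k), 2 / (x k - x i)) - ∑ l, 4 / (x k - ξ l))
            + ∑ i ∈ univ.filter (· ≠ k), 2 * b i / (x k - x i))) / (a - x k)
      = (∑ j, 2 * b j / ((a - x j) * (a - x k)))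
        - (∑ i ∈ univ.filter (· ≠ k), 2 * b k / ((x k - x i) * (a - x k)))
        + ((∑ l, 4 * b k / ((x k - ξ l) * (a - x k)))
        - (∑ i ∈ univ.filter (· ≠ k), 2 * b i / ((x k - x i) * (a - x k)))) := by
    intro k
    have e1 : (∑ j, 2 * b j / (a - x j) / (a - x k))
        = ∑ j, 2 * b j / ((a - x j) * (a - x k)) :=
      Finset.sum_congr rfl fun j _ => by rw [div_div]
    have e2 : (∑ i ∈ univ.filter (· ≠ k), b k * (2 / (x k - x i)) / (a - x k))
        = ∑ i ∈ univ.filter (· ≠ k), 2 * b k / ((x k - x i) * (a - x k)) :=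
      Finset.sum_congr rfl fun i _ => by rw [← mul_div_assoc, div_div, mul_comm (b k) 2]
    have e3 : (∑ l, b k * (4 / (x k - ξ l)) / (a - x k))
        = ∑ l, 4 * b k / ((x k - ξ l) * (a - x k)) :=
      Finset.sum_congr rfl fun l _ => by rw [← mul_div_assoc, div_div, mul_comm (b k) 4]
    have e4 : (∑ i ∈ univ.filter (· ≠ k), 2 * b i / (x k - x i) / (a - x k))
        = ∑ i ∈ univ.filter (· ≠ k), 2 * b i / ((x k - x i) * (a - x k)) :=
      Finset.sum_congr rfl fun i _ => by rw [div_div]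
    conv_lhs => rw [sub_div, add_div, mul_sub, sub_div, Finset.sum_div, Finset.mul_sum,
      Finset.sum_div, Finset.mul_sum, Finset.sum_div, Finset.sum_div]
    rw [e1, e2, e3, e4]
    ring
  have hxi : ∀ l : Fin m, 2 * ((∑ j, 2 * b j / (a - x j)) - ∑ j, 2 * b j / (ξ l - x j)) / (a - ξ l)
      = (∑ j, 4 * b j / ((a - x j) * (a - ξ l))) - ∑ j, 4 * b j / ((ξ l - x j) * (a - ξ l)) := by
    intro l
    have e1 : (∑ j, 2 * (2 * b j / (a - x j)) / (a - ξ l))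
        = ∑ j, 4 * b j / ((a - x j) * (a - ξ l)) :=
      Finset.sum_congr rfl fun j _ => by rw [← mul_div_assoc, div_div]; ring_nf
    have e2 : (∑ j, 2 * (2 * b j / (ξ l - x j)) / (a - ξ l))
        = ∑ j, 4 * b j / ((ξ l - x j) * (a - ξ l)) :=
      Finset.sum_congr rfl fun j _ => by rw [← mul_div_assoc, div_div]; ring_nf
    conv_lhs => rw [mul_sub, sub_div, Finset.mul_sum, Finset.sum_div, Finset.mul_sum,
      Finset.sum_div]
    rw [e1, e2]
  rw [Finset.sum_congr rfl fun k _ => hmid k, Finset.sum_congr rfl fun l _ => hxi l]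
  simp only [Finset.sum_add_distrib, Finset.sum_sub_distrib]
  have hswapP : (∑ k : Fin n, ∑ j : Fin n, 2 * b j / ((a - x j) * (a - x k)))
      = ∑ j : Fin n, ∑ k : Fin n, 2 * b j / ((a - x j) * (a - x k)) := Finset.sum_comm
  have hSfil : (∑ k : Fin n, ∑ i ∈ univ.filter (· ≠ k), 2 * b i / ((x k - x i) * (a - x k)))
      = ∑ k : Fin n, ∑ i : Fin n, if i ≠ k then 2 * b i / ((x k - x i) * (a - x k)) else 0 :=
    Finset.sum_congr rfl fun k _ => Finset.sum_filter _ _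
  have hswapS : (∑ k : Fin n, ∑ i : Fin n, if i ≠ k then 2 * b i / ((x k - x i) * (a - x k)) else 0)
      = ∑ i : Fin n, ∑ k : Fin n, if i ≠ k then 2 * b i / ((x k - x i) * (a - x k)) else 0 :=
    Finset.sum_comm
  have hswapU : (∑ l : Fin m, ∑ j : Fin n, 4 * b j / ((a - x j) * (a - ξ l)))
      = ∑ j : Fin n, ∑ l : Fin m, 4 * b j / ((a - x j) * (a - ξ l)) := Finset.sum_comm
  have hswapV : (∑ l : Fin m, ∑ j : Fin n, 4 * b j / ((ξ l - x j) * (a - ξ l)))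
      = ∑ j : Fin n, ∑ l : Fin m, 4 * b j / ((ξ l - x j) * (a - ξ l)) := Finset.sum_comm
  rw [hswapP, hSfil, hswapS, hswapU, hswapV]
  have Hsplit : (∑ j : Fin n, (-(2 * b j) / (a - x j) ^ 2
      + ((∑ k : Fin n, 2 * b j / ((a - x j) * (a - x k)))
          - (∑ i ∈ univ.filter (· ≠ j), 2 * b j / ((x j - x i) * (a - x j)))
        + ((∑ l : Fin m, 4 * b j / ((x j - ξ l) * (a - x j)))
          - ∑ k : Fin n, if j ≠ k then 2 * b j / ((x k - x j) * (a - x k)) else 0))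
      - ((∑ l : Fin m, 4 * b j / ((a - x j) * (a - ξ l)))
          - ∑ l : Fin m, 4 * b j / ((ξ l - x j) * (a - ξ l)))))
      = (∑ j : Fin n, -(2 * b j) / (a - x j) ^ 2)
      + ((∑ j : Fin n, ∑ k : Fin n, 2 * b j / ((a - x j) * (a - x k)))
          - (∑ j : Fin n, ∑ i ∈ univ.filter (· ≠ j), 2 * b j / ((x j - x i) * (a - x j)))
        + ((∑ j : Fin n, ∑ l : Fin m, 4 * b j / ((x j - ξ l) * (a - x j)))
          - ∑ j : Fin n, ∑ k : Fin n, if j ≠ k then 2 * b j / ((x k - x j) * (a - x k)) else 0))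
      - ((∑ j : Fin n, ∑ l : Fin m, 4 * b j / ((a - x j) * (a - ξ l)))
          - ∑ j : Fin n, ∑ l : Fin m, 4 * b j / ((ξ l - x j) * (a - ξ l))) := by
    simp only [Finset.sum_add_distrib, Finset.sum_sub_distrib]
  rw [← Hsplit]
  apply Finset.sum_eq_zero
  intro j _
  have hx1 : (∑ k : Fin n, (2 * b j / ((a - x j) * (a - x k))
        - (if k ≠ j then 2 * b j / ((x j - x k) * (a - x j)) else 0)
        - (if j ≠ k then 2 * b j / ((x k - x j) * (a - x k)) else 0)))
      = 2 * b j / ((a - x j) * (a - x j)) := by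
    rw [Finset.sum_eq_single j]
    · simp
    · intro k _ hk
      rw [if_pos hk, if_pos (Ne.symm hk)]
      exact two_pt_x (hax j) (hax k) (hxx j k (Ne.symm hk))
    · simp
  have hfilQ : (∑ i ∈ univ.filter (· ≠ j), 2 * b j / ((x j - x i) * (a - x j)))
      = ∑ k : Fin n, if k ≠ j then 2 * b j / ((x j - x k) * (a - x j)) else 0 :=
    Finset.sum_filter _ _
  have h2 : (∑ k : Fin n, 2 * b j / ((a - x j) * (a - x k)))
      - (∑ i ∈ univ.filter (· ≠ j), 2 * b j / ((x j - x i) * (a - x j)))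
      - (∑ k : Fin n, if j ≠ k then 2 * b j / ((x k - x j) * (a - x k)) else 0)
      = 2 * b j / ((a - x j) * (a - x j)) := by
    rw [hfilQ, ← Finset.sum_sub_distrib, ← Finset.sum_sub_distrib, hx1]
  have h3 : (∑ l : Fin m, 4 * b j / ((x j - ξ l) * (a - x j)))
      - (∑ l : Fin m, 4 * b j / ((a - x j) * (a - ξ l)))
      + (∑ l : Fin m, 4 * b j / ((ξ l - x j) * (a - ξ l))) = 0 := by
    rw [← Finset.sum_sub_distrib, ← Finset.sum_add_distrib]
    apply Finset.sum_eq_zero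
    intro l _
    exact two_pt_xi (hax j) (haξ l) (hxξ j l)
  have hsq : -(2 * b j) / (a - x j) ^ 2 + 2 * b j / ((a - x j) * (a - x j)) = 0 := by
    rw [sq]; ring
  linear_combination h2 + h3 + hsq

/-- for the multiple chordal Loewner flow with measurable
parametrization `ν`, `N_t(z) = g_t'(z) ∏_k (g_t(z)-x_k(t)) / ∏_l (g_t(z)-ξ_l(t))²`
is constant in `t`. -/
theorem stmt_14 (n m : ℕ) (ν : Fin n → ℝ → ℝ)
    (hνmeas : ∀ j, Measurable (ν j)) (hνpos : ∀ j t, 0 ≤ ν j t)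
    (g g' : ℝ → ℂ) (x : ℝ → Fin n → ℂ) (ξ : ℝ → Fin m → ℂ)
    (hxreal : ∀ t k, (x t k).im = 0)
    (hdist : ∀ t, Function.Injective (x t) ∧ Function.Injective (ξ t) ∧
      (∀ a b, x t a ≠ ξ t b) ∧ (∀ a, g t ≠ x t a) ∧ (∀ b, g t ≠ ξ t b) ∧ g' t ≠ 0)
    (hg : ∀ t, HasDerivAt g (∑ j : Fin n, 2 * ν j t / (g t - x t j)) t)
    (hg' : ∀ t, HasDerivAt g'
      (g' t * ∑ j : Fin n, -(2 * ν j t) / (g t - x t j) ^ 2) t)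
    (hx : ∀ t, ∀ j : Fin n, HasDerivAt (fun s => x s j)
      ((ν j t) * (∑ k ∈ Finset.univ.filter (· ≠ j), 2 / (x t j - x t k)
          - ∑ l : Fin m, 4 / (x t j - ξ t l))
        + ∑ k ∈ Finset.univ.filter (· ≠ j), 2 * ν k t / (x t j - x t k)) t)
    (hξ : ∀ t, ∀ l : Fin m, HasDerivAt (fun s => ξ s l)
      (∑ j : Fin n, 2 * ν j t / (ξ t l - x t j)) t) :
    ∀ s t : ℝ,
      g' s * (∏ k : Fin n, (g s - x s k)) / (∏ l : Fin m, (g s - ξ s l) ^ 2)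
        = g' t * (∏ k : Fin n, (g t - x t k)) / (∏ l : Fin m, (g t - ξ t l) ^ 2) := by
  classical
  suffices H : ∀ t : ℝ, HasDerivAt
      (fun u => g' u * (∏ k : Fin n, (g u - x u k)) / (∏ l : Fin m, (g u - ξ u l) ^ 2)) 0 t by
    intro s t
    exact is_const_of_fderiv_eq_zero (𝕜 := ℝ)
      (fun u => (H u).differentiableAt)
      (fun u => by
        rw [(H u).hasFDerivAt.fderiv]; ext v; simp) s t
  intro t
  -- nonvanishing
  have hxne : ∀ k, g t - x t k ≠ 0 := fun k => sub_ne_zero.mpr ((hdist t).2.2.2.1 k)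
  have hξne : ∀ l, g t - ξ t l ≠ 0 := fun l => sub_ne_zero.mpr ((hdist t).2.2.2.2.1 l)
  have hPne : (∏ k : Fin n, (g t - x t k)) ≠ 0 :=
    Finset.prod_ne_zero_iff.mpr fun k _ => hxne k
  have hQne : (∏ l : Fin m, (g t - ξ t l) ^ 2) ≠ 0 :=
    Finset.prod_ne_zero_iff.mpr fun l _ => pow_ne_zero 2 (hξne l)
  -- derivative of the numerator product
  have hP := HasDerivAt.fun_finsetProd (u := (univ : Finset (Fin n)))
    (f := fun k s => g s - x s k)
    (fun k _ => (hg t).sub (hx t k))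
  -- derivative of the denominator product
  have hQ : HasDerivAt (fun s => ∏ l : Fin m, (g s - ξ s l) ^ 2)
      (∑ l : Fin m, (∏ i ∈ univ.erase l, (g t - ξ t i) ^ 2) •
        (((∑ j : Fin n, 2 * ν j t / (g t - x t j))
            - ∑ j : Fin n, 2 * ν j t / (ξ t l - x t j)) * (g t - ξ t l)
          + (g t - ξ t l) * ((∑ j : Fin n, 2 * ν j t / (g t - x t j))
            - ∑ j : Fin n, 2 * ν j t / (ξ t l - x t j)))) t := by
    apply HasDerivAt.fun_finsetProd (f := fun l s => (g s - ξ s l) ^ 2)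
    intro l _
    have h := ((hg t).sub (hξ t l)).fun_mul ((hg t).sub (hξ t l))
    simpa only [← pow_two, Pi.sub_apply] using h
  have hN := ((hg' t).mul hP).div hQ hQne
  -- rewrite the product-rule sums
  have hP' : (∑ i : Fin n, (∏ j ∈ univ.erase i, (g t - x t j)) •
        ((∑ j : Fin n, 2 * ν j t / (g t - x t j))
          - (ν i t * ((∑ k ∈ univ.filter (· ≠ i), 2 / (x t i - x t k))
              - ∑ l : Fin m, 4 / (x t i - ξ t l))
            + ∑ k ∈ univ.filter (· ≠ i), 2 * ν k t / (x t i - x t k))))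
      = (∏ k : Fin n, (g t - x t k)) * ∑ i : Fin n,
          ((∑ j : Fin n, 2 * ν j t / (g t - x t j))
            - (ν i t * ((∑ k ∈ univ.filter (· ≠ i), 2 / (x t i - x t k))
                - ∑ l : Fin m, 4 / (x t i - ξ t l))
              + ∑ k ∈ univ.filter (· ≠ i), 2 * ν k t / (x t i - x t k))) / (g t - x t i) := by
    rw [Finset.mul_sum]
    refine Finset.sum_congr rfl fun i _ => ?_
    rw [smul_eq_mul]
    have he : (∏ j ∈ univ.erase i, (g t - x t j))
        = (∏ k : Fin n, (g t - x t k)) / (g t - x t i) := by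
      rw [eq_div_iff (hxne i)]
      exact Finset.prod_erase_mul univ _ (Finset.mem_univ i)
    rw [he, div_mul_eq_mul_div, mul_div_assoc]
  have hQ' : (∑ l : Fin m, (∏ i ∈ univ.erase l, (g t - ξ t i) ^ 2) •
        (((∑ j : Fin n, 2 * ν j t / (g t - x t j))
            - ∑ j : Fin n, 2 * ν j t / (ξ t l - x t j)) * (g t - ξ t l)
          + (g t - ξ t l) * ((∑ j : Fin n, 2 * ν j t / (g t - x t j))
            - ∑ j : Fin n, 2 * ν j t / (ξ t l - x t j))))
      = (∏ l : Fin m, (g t - ξ t l) ^ 2) * ∑ l : Fin m,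
          2 * ((∑ j : Fin n, 2 * ν j t / (g t - x t j))
            - ∑ j : Fin n, 2 * ν j t / (ξ t l - x t j)) / (g t - ξ t l) := by
    rw [Finset.mul_sum]
    refine Finset.sum_congr rfl fun l _ => ?_
    rw [smul_eq_mul]
    have he : (∏ i ∈ univ.erase l, (g t - ξ t i) ^ 2)
        = (∏ i : Fin m, (g t - ξ t i) ^ 2) / (g t - ξ t l) ^ 2 := by
      rw [eq_div_iff (pow_ne_zero 2 (hξne l))]
      exact Finset.prod_erase_mul univ _ (Finset.mem_univ l)
    rw [he]
    have hc : g t - ξ t l ≠ 0 := hξne l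
    field_simp
    ring
  -- key algebraic identity
  have hkey := key n m (g t) (x t) (ξ t) (fun j => ((ν j t : ℝ) : ℂ))
    hxne hξne
    (fun i k hik => sub_ne_zero.mpr (fun h => hik ((hdist t).1 h)))
    (fun k l => sub_ne_zero.mpr ((hdist t).2.2.1 k l))
  refine hN.congr_deriv ?_
  rw [hP', hQ', div_eq_zero_iff]
  left
  simp only [Pi.mul_apply]
  linear_combination (g' t * (∏ k : Fin n, (g t - x t k)) * (∏ l : Fin m, (g t - ξ t l) ^ 2)) * hkey
end
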